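/- arXiv:2302.08633 — 3 statements merged into one kernel-verified Lean document; each statement's English description precedes it below -/
import Mathlib

section
/- Let $F_k$ be the free group on generators $a_1, \ldots, a_k$. Then the $\binom{k}{2}$ commutators $[a_i, a_j] = a_i a_j a_i^{-1} a_j^{-1}$ with $i < j$ generate a free subgroup of $F_k$ of rank $\binom{k}{2}$. -/
/-!
Ping-pong on reduced words. For `i ≠ j`, left multiplication by `⁅aᵢ, aⱼ⁆ = aᵢ aⱼ aᵢ⁻¹ aⱼ⁻¹`
sends every reduced word not beginning with `aⱼ aᵢ` to one beginning with `aᵢ aⱼ`, and its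
inverse `⁅aⱼ, aᵢ⁆` does the same with the roles swapped. When `i < j`, the sets of words beginning
with `aᵢ aⱼ` or with `aⱼ aᵢ` are pairwise disjoint over all pairs, so the ping-pong lemma applies.
It needs at least two pairs; with fewer, the index order is first embedded into a larger one,
which only enlarges the free group on the commutators.
-/

open scoped commutatorElement

namespace FreeGroup

variable {α β : Type*}

section Prefix

variable [DecidableEq α]

def startingWith (i j : α) : Set (FreeGroup α) :=
  {w | [(i, true), (j, true)] <+: w.toWord}

theorem disjoint_startingWith {i j i' j' : α} (h : (i, j) ≠ (i', j')) :
    Disjoint (startingWith i j) (startingWith i' j') := by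
  refine Set.disjoint_left.2 fun w hw hw' => h ?_
  have := (List.prefix_of_prefix_length_le hw hw' le_rfl).eq_of_length rfl
  simp_all

theorem toWord_mk_of_red {L M : List (α × Bool)} (hLM : Red L M) (hM : IsReduced M) :
    (mk L).toWord = M := by
  rw [toWord_mk, reduce.eq_of_red hLM, hM.reduce_eq]

theorem commutator_mul_mem_startingWith {i j : α} (hij : i ≠ j) {w : FreeGroup α}
    (hw : w ∉ startingWith j i) : ⁅of i, of j⁆ * w ∈ startingWith i j := by
  obtain ⟨M, hred, hM⟩ :
      ∃ M, Red ((j, false) :: w.toWord) M ∧ IsReduced ((i, false) :: M) := by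
    -- `M` is the reduced form of `aⱼ⁻¹ w`; it cannot begin with `aᵢ`, as `w` does not begin
    -- with `aⱼ aᵢ`.
    have hL : IsReduced w.toWord := isReduced_toWord
    simp only [startingWith, Set.mem_ofPred_eq] at hw
    generalize w.toWord = L at hL hw
    rcases L with _ | ⟨y, L⟩
    · exact ⟨[(j, false)], Red.refl, by simp⟩
    by_cases hy : y = (j, true)
    · subst hy
      refine ⟨L, Red.Step.cons_not.to_red, ?_⟩
      rcases L with _ | ⟨z, L⟩
      · simp
      · rw [isReduced_cons_cons]
        refine ⟨fun hiz => ?_, (isReduced_cons_cons.1 hL).2⟩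
        obtain ⟨z, b⟩ := z
        cases b
        · rfl
        · simp_all
    · refine ⟨(j, false) :: y :: L, Red.refl, ?_⟩
      obtain ⟨y, b⟩ := y
      simp_all
  have hword : ⁅of i, of j⁆ * w =
      mk ((i, true) :: (j, true) :: (i, false) :: (j, false) :: w.toWord) := by
    conv_lhs => rw [← mk_toWord (x := w)]
    rfl
  have hT : IsReduced ((i, true) :: (j, true) :: (i, false) :: M) := by
    simp [hM, Ne.symm hij]
  simp only [startingWith, Set.mem_ofPred_eq, hword,
    toWord_mk_of_red hred.cons_cons.cons_cons.cons_cons hT]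
  exact List.prefix_append [_, _] _

end Prefix

def commutatorLift (α : Type*) [LT α] : FreeGroup {p : α × α // p.1 < p.2} →* FreeGroup α :=
  lift fun p => ⁅of p.1.1, of p.1.2⁆

theorem commutatorLift_injective_of_nontrivial [Preorder α]
    [Nontrivial {p : α × α // p.1 < p.2}] : Function.Injective (commutatorLift α) := by
  classical
  refine injective_lift_of_ping_pong _ (fun p => startingWith p.1.1 p.1.2)
    (fun p => startingWith p.1.2 p.1.1) (fun p => ⟨⁅of p.1.1, of p.1.2⁆, ?_⟩) (fun p q hpq => ?_)
    (fun p q hpq => ?_) (fun p q => ?_) ?_ ?_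
  · simpa using commutator_mul_mem_startingWith p.2.ne (w := 1) (by simp [startingWith])
  · exact disjoint_startingWith fun h => hpq (Subtype.ext h)
  · exact disjoint_startingWith fun h => hpq <| Subtype.ext <| Prod.ext
      (Prod.mk.inj h).2 (Prod.mk.inj h).1
  · exact disjoint_startingWith fun h => by
      simp only [Prod.mk.injEq] at h
      exact lt_asymm p.2 (h.1 ▸ h.2 ▸ q.2)
  · rintro p _ ⟨w, hw, rfl⟩
    exact commutator_mul_mem_startingWith p.2.ne hw
  · rintro p _ ⟨w, hw, rfl⟩
    simpa using commutator_mul_mem_startingWith p.2.ne' hw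

theorem commutatorLift_injective_of_strictMono [Preorder α] [Preorder β] {f : α → β}
    (hf : StrictMono f) (hinj : Function.Injective f)
    (h : Function.Injective (commutatorLift β)) : Function.Injective (commutatorLift α) := by
  let g : {p : α × α // p.1 < p.2} → {q : β × β // q.1 < q.2} :=
    fun p => ⟨(f p.1.1, f p.1.2), hf p.2⟩
  have hg : Function.Injective g := fun p q hpq => by
    simp only [g, Subtype.mk.injEq, Prod.mk.injEq, hinj.eq_iff] at hpq
    exact Subtype.ext (Prod.ext hpq.1 hpq.2)
  have hcomm : (commutatorLift β).comp (map g) = (map f).comp (commutatorLift α) := by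
    ext p
    simp [commutatorLift, map_commutatorElement, g]
  refine Function.Injective.of_comp (f := map f) ?_
  rw [← MonoidHom.coe_comp, ← hcomm, MonoidHom.coe_comp]
  exact h.comp (map_injective hg)

theorem commutatorLift_injective (α : Type*) [Preorder α] :
    Function.Injective (commutatorLift α) := by
  have : Nontrivial {p : (α ⊕ₗ ℕ) × (α ⊕ₗ ℕ) // p.1 < p.2} :=
    ⟨⟨(toLex (.inr 0), toLex (.inr 1)), by simp⟩, ⟨(toLex (.inr 0), toLex (.inr 2)), by simp⟩,
      by simp⟩
  exact commutatorLift_injective_of_strictMono (β := α ⊕ₗ ℕ) Sum.Lex.inl_strictMono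
    (toLex.injective.comp Sum.inl_injective) commutatorLift_injective_of_nontrivial

end FreeGroup

/-- The `k.choose 2` commutators `⁅aᵢ, aⱼ⁆` with `i < j` of the generators of the
free group on `k` generators freely generate a free subgroup of rank `k.choose 2`. -/
theorem stmt_0 (k : ℕ) :
    Nat.card {p : Fin k × Fin k // p.1 < p.2} = k.choose 2 ∧
    Function.Injective
      (FreeGroup.lift (fun p : {p : Fin k × Fin k // p.1 < p.2} =>
        ⁅FreeGroup.of p.1.1, FreeGroup.of p.1.2⁆) :
        FreeGroup {p : Fin k × Fin k // p.1 < p.2} →* FreeGroup (Fin k)) := by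
  refine ⟨?_, FreeGroup.commutatorLift_injective (Fin k)⟩
  rw [Nat.card_eq_fintype_card, Fintype.card_subtype, Fintype.card_product_filter_lt,
    Fintype.card_fin]
end

section
/- In the free group $F_k$ on generators $a_1,\ldots,a_k$, any nonempty reduced word in the commutators $[a_{i_1},a_{j_1}]\cdots[a_{i_N},a_{j_N}]$ (where each $i_l \neq j_l$, and for each $l$ either $a_{i_l} \neq a_{j_{l+1}}$ or $a_{j_l} \neq a_{i_{l+1}}$) is a nontrivial element of $F_k$; moreover its reduced word length in the generators $a_\bullet$ is at least $2N+2$. -/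
/-!
In reduced form `⁅a, b⁆ = a b a⁻¹ b⁻¹`. Multiplying on the left by `⁅a, b⁆` an element whose
reduced word starts with `a' b'`, the only letters that can cancel are `b⁻¹ a'` (when `b = a'`);
after that cancellation `a⁻¹ b'` survives, because no obvious cancellation means `a ≠ b'`.
So each further commutator adds at least two letters and the reduced word keeps starting with
`a b`, which gives length at least `4 + 2 (N - 1) = 2 N + 2`.
-/

open scoped commutatorElement

namespace FreeGroup

variable {α : Type*}

theorem commutatorElement_of_of (a b : α) :
    ⁅of a, of b⁆ = mk [(a, true), (b, true), (a, false), (b, false)] := by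
  simp only [commutatorElement_def, of, inv_mk, mul_mk]
  rfl

variable [DecidableEq α]

theorem toWord_commutatorElement_of_of_mul {a b : α} (hab : a ≠ b) {x : FreeGroup α}
    (hx : IsReduced ((b, false) :: x.toWord)) :
    (⁅of a, of b⁆ * x).toWord = (a, true) :: (b, true) :: (a, false) :: (b, false) :: x.toWord := by
  rw [commutatorElement_of_of, ← mk_toWord (x := x), mul_mk, toWord_mk, toWord_mk,
    IsReduced.reduce_eq isReduced_toWord]
  refine IsReduced.reduce_eq ?_
  simp [isReduced_cons_cons, hab, hab.symm, hx]

theorem toWord_commutatorElement_of_of_mul_of_cancel {a b : α} (hab : a ≠ b)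
    {x : FreeGroup α} {w : List (α × Bool)} (hx : x.toWord = (b, true) :: w)
    (hw : IsReduced ((a, false) :: w)) :
    (⁅of a, of b⁆ * x).toWord = (a, true) :: (b, true) :: (a, false) :: w := by
  have hcancel : ⁅of a, of b⁆ * x = mk [(a, true), (b, true), (a, false)] * mk w := by
    have hx' : x = of b * mk w := by rw [← mk_toWord (x := x), hx, of, mul_mk]; rfl
    have hpre : of a * of b * (of a)⁻¹ = mk [(a, true), (b, true), (a, false)] := by
      simp only [of, inv_mk, mul_mk]; rfl
    rw [hx', commutatorElement_def, ← hpre]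
    group
  rw [hcancel, mul_mk, toWord_mk]
  refine IsReduced.reduce_eq ?_
  simp [isReduced_cons_cons, hab, hab.symm, hw]

theorem exists_toWord_prod_commutatorElement {a b : α} {l : List (α × α)}
    (hne : ∀ p ∈ (a, b) :: l, p.1 ≠ p.2)
    (hchain : ((a, b) :: l).IsChain fun p q ↦ p.1 ≠ q.2 ∨ p.2 ≠ q.1) :
    ∃ w, (((a, b) :: l).map fun p ↦ ⁅of p.1, of p.2⁆).prod.toWord =
      (a, true) :: (b, true) :: w ∧ 2 * l.length + 2 ≤ w.length := by
  induction l generalizing a b with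
  | nil =>
    have hab : a ≠ b := hne (a, b) List.mem_cons_self
    refine ⟨[(a, false), (b, false)], ?_, le_rfl⟩
    simpa using toWord_commutatorElement_of_of_mul hab (x := 1) (by simp [IsReduced.singleton])
  | cons p l ih =>
    obtain ⟨a', b'⟩ := p
    have hab : a ≠ b := hne (a, b) List.mem_cons_self
    obtain ⟨hjunction, hchain'⟩ := List.isChain_cons_cons.mp hchain
    obtain ⟨w, hw, hlen⟩ := ih (fun p hp ↦ hne p (List.mem_cons_of_mem _ hp)) hchain'
    have hred : IsReduced ((a', true) :: (b', true) :: w) := hw ▸ isReduced_toWord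
    rw [List.map_cons, List.prod_cons]
    by_cases hba' : b = a'
    · subst hba'
      have hab' : a ≠ b' := hjunction.resolve_right (not_not.mpr rfl)
      refine ⟨(a, false) :: (b', true) :: w,
        toWord_commutatorElement_of_of_mul_of_cancel hab hw ?_,
        by simp only [List.length_cons]; omega⟩
      rw [isReduced_cons_cons]
      exact ⟨by simp [hab'], hred.infix (List.suffix_cons _ _).isInfix⟩
    · refine ⟨(a, false) :: (b, false) :: (a', true) :: (b', true) :: w, ?_,
        by simp only [List.length_cons]; omega⟩
      have hred' : IsReduced ((b, false) :: (a', true) :: (b', true) :: w) :=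
        isReduced_cons_cons.mpr ⟨by simp [hba'], hred⟩
      rw [toWord_commutatorElement_of_of_mul hab (hw ▸ hred'), hw]

theorem two_mul_length_add_two_le_length_toWord_prod_commutatorElement {l : List (α × α)}
    (hl : l ≠ []) (hne : ∀ p ∈ l, p.1 ≠ p.2)
    (hchain : l.IsChain fun p q ↦ p.1 ≠ q.2 ∨ p.2 ≠ q.1) :
    2 * l.length + 2 ≤ (l.map fun p ↦ ⁅of p.1, of p.2⁆).prod.toWord.length := by
  obtain ⟨⟨a, b⟩, l, rfl⟩ := List.exists_cons_of_ne_nil hl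
  obtain ⟨w, hw, hlen⟩ := exists_toWord_prod_commutatorElement hne hchain
  rw [hw]
  simp only [List.length_cons] at hlen ⊢
  omega

end FreeGroup

/-- Any product of commutators of generators of the free group on `k` generators,
with `i l ≠ j l` and no obvious cancellation between consecutive commutators, is a
nontrivial element whose reduced word length is at least `2 N + 2`. -/
theorem stmt_1 (k N : ℕ) (hN : 0 < N) (i j : Fin N → Fin k)
    (hij : ∀ l, i l ≠ j l)
    (hcons : ∀ (l : Fin N) (hl : (l : ℕ) + 1 < N),
      i l ≠ j ⟨(l : ℕ) + 1, hl⟩ ∨ j l ≠ i ⟨(l : ℕ) + 1, hl⟩) :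
    (List.ofFn (fun l : Fin N =>
        ⁅FreeGroup.of (i l), FreeGroup.of (j l)⁆)).prod ≠ 1 ∧
    2 * N + 2 ≤ ((List.ofFn (fun l : Fin N =>
        ⁅FreeGroup.of (i l), FreeGroup.of (j l)⁆)).prod).toWord.length := by
  have hlen := FreeGroup.two_mul_length_add_two_le_length_toWord_prod_commutatorElement
    (l := List.ofFn fun l ↦ (i l, j l)) (by simpa using hN.ne')
    (by simpa [List.mem_ofFn] using hij)
    (List.isChain_ofFn.mpr fun l hl ↦ hcons ⟨l, by omega⟩ hl)
  rw [List.map_ofFn, List.length_ofFn] at hlen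
  refine ⟨fun h ↦ ?_, hlen⟩
  rw [Function.comp_def, h, FreeGroup.toWord_one] at hlen
  simp at hlen
end

section
/- Let $0 < r, \delta, \tau < 1$ with $4\delta + \tau < r$, and let $f, g : B_0(r) \to \mathbb{C}^d$ be injective holomorphic maps with $\|f - \mathrm{id}\|_{C^0(B_0(r))} \leq \delta$ and $\|g - \mathrm{id}\|_{C^0(B_0(r))} \leq \delta$. Then the commutator $[f,g] = f \circ g \circ f^{-1} \circ g^{-1}$ is well-defined on the ball $B_0(r - 4\delta - \tau)$ and satisfies $\|[f,g] - \mathrm{id}\|_{C^0(B_0(r-4\delta-\tau))} \leq \frac{2}{\tau}\|f - \mathrm{id}\|_{C^0(B_0(r))}\|g - \mathrm{id}\|_{C^0(B_0(r))}$. -/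
/-!
Write `f = id + F` and `g = id + G`. Staying a distance `τ` inside the ball, the Cauchy
estimate bounds the derivatives of `F` and `G` by `δf / τ` and `δg / τ`, so they are small
Lipschitz perturbations. This makes `g` and `f` onto smaller balls (Banach fixed point), and
`f (g w) - g (f w) = (F (g w) - F w) - (G (f w) - G w)` has norm at most `2 δf δg / τ`.
-/

open Metric

section CauchyEstimates

variable {E F : Type*} [NormedAddCommGroup E] [NormedSpace ℂ E] [NormedAddCommGroup F]
  [NormedSpace ℂ F]

/-- Restricting `u` to the complex lines through `v` reduces this to the one-variable Cauchy
estimate. -/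
theorem norm_fderiv_le_of_forall_mem_closedBall_norm_le {u : E → F} {v : E} {s M : ℝ}
    (hs : 0 < s) (hu : DifferentiableOn ℂ u (closedBall v s))
    (hM : ∀ z ∈ closedBall v s, ‖u z‖ ≤ M) : ‖fderiv ℂ u v‖ ≤ M / s := by
  have hM0 : 0 ≤ M := (norm_nonneg _).trans (hM v (mem_closedBall_self hs.le))
  refine ContinuousLinearMap.opNorm_le_bound _ (div_nonneg hM0 hs.le) fun e => ?_
  rcases eq_or_ne e 0 with rfl | he
  · simp
  have he0 : 0 < ‖e‖ := norm_pos_iff.mpr he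
  set ρ := s / ‖e‖
  have hρ : 0 < ρ := div_pos hs he0
  have hline : HasFDerivAt (fun t : ℂ => v + t • e) ((1 : ℂ →L[ℂ] ℂ).smulRight e) 0 :=
    ((hasFDerivAt_id (0 : ℂ)).smul_const e).const_add v
  have hmaps : Set.MapsTo (fun t : ℂ => v + t • e) (closedBall 0 ρ) (closedBall v s) := by
    intro t ht
    rw [mem_closedBall_zero_iff] at ht
    rw [mem_closedBall, dist_self_add_left, norm_smul]
    calc ‖t‖ * ‖e‖ ≤ ρ * ‖e‖ := by gcongr
      _ = s := div_mul_cancel₀ s he0.ne'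
  have hφ : DiffContOnCl ℂ (fun t : ℂ => u (v + t • e)) (ball 0 ρ) :=
    (hu.comp (fun t _ => (hasFDerivAt_id t |>.smul_const e |>.const_add v).differentiableAt
      |>.differentiableWithinAt) hmaps).diffContOnCl_ball subset_rfl
  have hderiv : deriv (fun t : ℂ => u (v + t • e)) 0 = fderiv ℂ u v e := by
    have hu' : HasFDerivAt u (fderiv ℂ u v) (v + (0 : ℂ) • e) := by
      rw [zero_smul, add_zero]
      exact (hu.differentiableAt (closedBall_mem_nhds v hs)).hasFDerivAt
    simpa [Function.comp_def] using (hu'.comp (0 : ℂ) hline).hasDerivAt.deriv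
  calc ‖fderiv ℂ u v e‖ ≤ M / ρ := hderiv ▸
        Complex.norm_deriv_le_of_forall_mem_sphere_norm_le hρ hφ fun t ht =>
          hM _ (hmaps (sphere_subset_closedBall ht))
    _ = M / s * ‖e‖ := by rw [div_div_eq_mul_div, div_mul_eq_mul_div]

theorem norm_sub_le_of_forall_mem_ball_norm_le {u : E → F} {c x y : E} {r s M : ℝ}
    (hs : 0 < s) (hu : DifferentiableOn ℂ u (ball c r)) (hM : ∀ z ∈ ball c r, ‖u z‖ ≤ M)
    (hx : x ∈ ball c (r - s)) (hy : y ∈ ball c (r - s)) :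
    ‖u y - u x‖ ≤ M / s * ‖y - x‖ := by
  have hsub : ∀ w ∈ ball c (r - s), closedBall w s ⊆ ball c r := fun w hw =>
    closedBall_subset_ball' (by rw [mem_ball] at hw; linarith)
  refine Convex.norm_image_sub_le_of_norm_fderiv_le (𝕜 := ℂ) (fun w hw => ?_) (fun w hw => ?_)
    (convex_ball c (r - s)) hx hy
  · exact hu.differentiableAt (isOpen_ball.mem_nhds (hsub w hw (mem_closedBall_self hs.le)))
  · exact norm_fderiv_le_of_forall_mem_closedBall_norm_le hs (hu.mono (hsub w hw))
      fun z hz => hM z (hsub w hw hz)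

end CauchyEstimates

section PerturbationsOfIdentity

variable {E : Type*} [NormedAddCommGroup E] [NormedSpace ℂ E]

/-- By the Cauchy estimate `w ↦ z - (g w - w)` is a `1/2`-contraction of `closedBall z ε`;
its fixed point is the preimage. -/
theorem exists_mem_closedBall_eq_of_norm_sub_id_le [CompleteSpace E] {g : E → E} {c z : E}
    {r ε : ℝ} (hg : DifferentiableOn ℂ g (ball c r)) (hgε : ∀ w ∈ ball c r, ‖g w - w‖ ≤ ε)
    (hε : 0 ≤ ε) (hz : dist z c + 3 * ε < r) : ∃ w ∈ closedBall z ε, g w = z := by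
  rcases hε.eq_or_lt with rfl | hε
  · refine ⟨z, mem_closedBall_self le_rfl, sub_eq_zero.mp (norm_le_zero_iff.mp ?_)⟩
    exact hgε z (by rw [mem_ball]; linarith)
  set T : E → E := fun w => z - (g w - w)
  have hsub : closedBall z ε ⊆ ball c (r - 2 * ε) := closedBall_subset_ball' (by linarith)
  have hmaps : Set.MapsTo T (closedBall z ε) (closedBall z ε) := fun w hw => by
    rw [mem_closedBall, dist_eq_norm, sub_sub_cancel_left, norm_neg]
    exact hgε w (ball_subset_ball (by linarith) (hsub hw))
  have hlip : LipschitzOnWith (1 / 2) T (closedBall z ε) := by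
    refine LipschitzOnWith.of_dist_le_mul fun a ha b hb => ?_
    have h := norm_sub_le_of_forall_mem_ball_norm_le (u := fun w => g w - w) (by positivity)
      (hg.sub differentiableOn_id) hgε (hsub ha) (hsub hb)
    rw [dist_eq_norm, sub_sub_sub_cancel_left, dist_eq_norm']
    calc ‖(g b - b) - (g a - a)‖ ≤ ε / (2 * ε) * ‖b - a‖ := h
      _ = ((1 / 2 : NNReal) : ℝ) * ‖b - a‖ := by push_cast; field_simp
  obtain ⟨w, hw, hfix, -⟩ := ContractingWith.exists_fixedPoint' isClosed_closedBall.isComplete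
    hmaps ⟨by rw [← NNReal.coe_lt_coe]; norm_num, hmaps.lipschitzOnWith_iff_restrict.mp hlip⟩
    (mem_closedBall_self hε.le) (edist_ne_top _ _)
  refine ⟨w, hw, ?_⟩
  have hT : z - (g w - w) = w := hfix
  linear_combination (norm := abel) -hT

theorem norm_comp_sub_comp_le {f g : E → E} {c w : E} {r τ ε η : ℝ} (hτ : 0 < τ)
    (hf : DifferentiableOn ℂ f (ball c r)) (hg : DifferentiableOn ℂ g (ball c r))
    (hfε : ∀ z ∈ ball c r, ‖f z - z‖ ≤ ε) (hgη : ∀ z ∈ ball c r, ‖g z - z‖ ≤ η)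
    (hw : w ∈ ball c (r - τ)) (hfw : f w ∈ ball c (r - τ)) (hgw : g w ∈ ball c (r - τ)) :
    ‖f (g w) - g (f w)‖ ≤ 2 / τ * ε * η := by
  have hwr : w ∈ ball c r := ball_subset_ball (by linarith) hw
  have hε : 0 ≤ ε := (norm_nonneg _).trans (hfε w hwr)
  have hη : 0 ≤ η := (norm_nonneg _).trans (hgη w hwr)
  have hF := norm_sub_le_of_forall_mem_ball_norm_le (u := fun z => f z - z) hτ
    (hf.sub differentiableOn_id) hfε hw hgw
  have hG := norm_sub_le_of_forall_mem_ball_norm_le (u := fun z => g z - z) hτ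
    (hg.sub differentiableOn_id) hgη hw hfw
  calc ‖f (g w) - g (f w)‖
      = ‖((f (g w) - g w) - (f w - w)) - ((g (f w) - f w) - (g w - w))‖ := by congr 1; abel
    _ ≤ ε / τ * ‖g w - w‖ + η / τ * ‖f w - w‖ := (norm_sub_le _ _).trans (add_le_add hF hG)
    _ ≤ ε / τ * η + η / τ * ε := by gcongr; exacts [hgη w hwr, hfε w hwr]
    _ = 2 / τ * ε * η := by ring

end PerturbationsOfIdentity

theorem stmt_6_general {d : ℕ} (r δ τ δf δg : ℝ)
    (hδ0 : 0 < δ) (hτ0 : 0 < τ)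
    (f g : EuclideanSpace ℂ (Fin d) → EuclideanSpace ℂ (Fin d))
    (hf : DifferentiableOn ℂ f (ball 0 r)) (hg : DifferentiableOn ℂ g (ball 0 r))
    (hfδ : ∀ z ∈ ball (0 : EuclideanSpace ℂ (Fin d)) r, ‖f z - z‖ ≤ δf)
    (hgδ : ∀ z ∈ ball (0 : EuclideanSpace ℂ (Fin d)) r, ‖g z - z‖ ≤ δg)
    (hδf : δf ≤ δ) (hδg : δg ≤ δ) :
    ∀ z ∈ ball (0 : EuclideanSpace ℂ (Fin d)) (r - 4 * δ - τ),
      ∃ w₁ ∈ ball (0 : EuclideanSpace ℂ (Fin d)) r,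
        ∃ w₂ ∈ ball (0 : EuclideanSpace ℂ (Fin d)) r,
          g w₁ = z ∧ f w₂ = w₁ ∧ g w₂ ∈ ball (0 : EuclideanSpace ℂ (Fin d)) r ∧
          ‖f (g w₂) - z‖ ≤ 2 / τ * δf * δg := by
  intro z hz
  rw [mem_ball] at hz
  have hzr : z ∈ ball 0 r := mem_ball.mpr (by linarith)
  have hδf0 : 0 ≤ δf := (norm_nonneg _).trans (hfδ z hzr)
  have hδg0 : 0 ≤ δg := (norm_nonneg _).trans (hgδ z hzr)
  obtain ⟨w₁, hw₁, rfl⟩ := exists_mem_closedBall_eq_of_norm_sub_id_le hg hgδ hδg0 (by linarith)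
  rw [mem_closedBall] at hw₁
  have hw₁0 : dist w₁ 0 < r - 3 * δ - τ := by linarith [dist_triangle w₁ (g w₁) 0]
  obtain ⟨w₂, hw₂, rfl⟩ := exists_mem_closedBall_eq_of_norm_sub_id_le hf hfδ hδf0 (by linarith)
  rw [mem_closedBall] at hw₂
  have hw₂0 : dist w₂ 0 < r - 2 * δ - τ := by linarith [dist_triangle w₂ (f w₂) 0]
  have hgw₂ : dist (g w₂) w₂ ≤ δg :=
    (dist_eq_norm _ _).trans_le (hgδ w₂ (mem_ball.mpr (by linarith)))
  have hgw₂0 : dist (g w₂) 0 < r - δ - τ := by linarith [dist_triangle (g w₂) w₂ 0]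
  refine ⟨f w₂, mem_ball.mpr (by linarith), w₂, mem_ball.mpr (by linarith), rfl, rfl,
    mem_ball.mpr (by linarith), ?_⟩
  exact norm_comp_sub_comp_le hτ0 hf hg hfδ hgδ (mem_ball.mpr (by linarith))
    (mem_ball.mpr (by linarith)) (mem_ball.mpr (by linarith))

/-- Loray–Rebelo/Ghys commutator estimate: if `f, g` are injective holomorphic maps on
`B_0(r) ⊂ ℂ^d` at `C⁰`-distance at most `δ` from the identity, and `4δ + τ < r`, then
the commutator `[f,g] = f ∘ g ∘ f⁻¹ ∘ g⁻¹` is defined on `B_0(r - 4δ - τ)` and is at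
`C⁰`-distance at most `(2/τ)‖f - id‖ ‖g - id‖` from the identity. -/
theorem stmt_6 {d : ℕ} (r δ τ δf δg : ℝ)
    (hr0 : 0 < r) (hr1 : r < 1) (hδ0 : 0 < δ) (hδ1 : δ < 1) (hτ0 : 0 < τ) (hτ1 : τ < 1)
    (hsum : 4 * δ + τ < r)
    (f g : EuclideanSpace ℂ (Fin d) → EuclideanSpace ℂ (Fin d))
    (hf : DifferentiableOn ℂ f (ball 0 r)) (hg : DifferentiableOn ℂ g (ball 0 r))
    (hfinj : Set.InjOn f (ball 0 r)) (hginj : Set.InjOn g (ball 0 r))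
    (hfδ : ∀ z ∈ ball (0 : EuclideanSpace ℂ (Fin d)) r, ‖f z - z‖ ≤ δf)
    (hgδ : ∀ z ∈ ball (0 : EuclideanSpace ℂ (Fin d)) r, ‖g z - z‖ ≤ δg)
    (hδf : δf ≤ δ) (hδg : δg ≤ δ) :
    ∀ z ∈ ball (0 : EuclideanSpace ℂ (Fin d)) (r - 4 * δ - τ),
      ∃ w₁ ∈ ball (0 : EuclideanSpace ℂ (Fin d)) r,
        ∃ w₂ ∈ ball (0 : EuclideanSpace ℂ (Fin d)) r,
          g w₁ = z ∧ f w₂ = w₁ ∧ g w₂ ∈ ball (0 : EuclideanSpace ℂ (Fin d)) r ∧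
          ‖f (g w₂) - z‖ ≤ 2 / τ * δf * δg :=
  stmt_6_general r δ τ δf δg hδ0 hτ0 f g hf hg hfδ hgδ hδf hδg
end
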